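/- arXiv:math/0112079 — 9 statements merged into one kernel-verified Lean document; each statement's English description precedes it below -/
import Mathlib

section
/- Under the Gr_{p,q}(2) relations, the matrix Â_L⁻¹ with first row (q⁻¹δ, β) and second row (−pq⁻¹γ, −pα) is a left inverse of Â up to the left quantum dual determinant Δ_L := βγ + q⁻¹δα; that is, Â_L⁻¹ · Â = Δ_L · I, where I is the 2×2 identity matrix over A and Δ_L · I denotes the scalar matrix with Δ_L on the diagonal. -/
/-- Under the Gr_{p,q}(2) relations, the matrix Â_L⁻¹ is a left inverse of Â up to
the left quantum dual determinant Δ_L := βγ + q⁻¹δα. -/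
theorem grassmann_left_inverse
    (A : Type*) [Ring A] [Algebra ℂ A] (p q : ℂ) (hp : p ≠ 0) (hq : q ≠ 0)
    (α β γ δ : A)
    (hαβ : α * β + p⁻¹ • (β * α) = 0)
    (hαγ : α * γ + q⁻¹ • (γ * α) = 0)
    (hγδ : γ * δ + p⁻¹ • (δ * γ) = 0)
    (hβδ : β * δ + q⁻¹ • (δ * β) = 0)
    (hαδ : α * δ + δ * α = 0)
    (hα2 : α ^ 2 = 0) (hβ2 : β ^ 2 = 0) (hγ2 : γ ^ 2 = 0) (hδ2 : δ ^ 2 = 0)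
    (hβγ : β * γ + (p * q⁻¹) • (γ * β) = (p - q⁻¹) • (δ * α)) :
    (!![q⁻¹ • δ, β; (-(p * q⁻¹)) • γ, (-p) • α] : Matrix (Fin 2) (Fin 2) A) *
        !![α, β; γ, δ] =
      (β * γ + q⁻¹ • (δ * α)) • (1 : Matrix (Fin 2) (Fin 2) A) := by
  ext i j
  fin_cases i <;> fin_cases j <;>
    simp [Matrix.mul_apply, Fin.sum_univ_two, Matrix.one_apply, smul_mul_assoc]
  · abel
  · linear_combination (norm := module) hβδ
  · linear_combination (norm := module) (-p : ℂ) • hαγ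
  · linear_combination (norm := module) -hβγ - (p : ℂ) • hαδ
end

section
/- Under the Gr_{p,q}(2) relations, the matrix Â_R⁻¹ with first row (−qδ, β) and second row (−qp⁻¹γ, p⁻¹α) is a right inverse of Â up to the right quantum dual determinant Δ_R := γβ − p⁻¹αδ; that is, Â · Â_R⁻¹ = Δ_R · I, where I is the 2×2 identity matrix over A and Δ_R · I denotes the scalar matrix with Δ_R on the diagonal. -/
/-- Under the Gr_{p,q}(2) relations, the matrix Â_R⁻¹ is a right inverse of Â up to
the right quantum dual determinant Δ_R := γβ − p⁻¹αδ. -/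
theorem grassmann_right_inverse
    (A : Type*) [Ring A] [Algebra ℂ A] (p q : ℂ) (hp : p ≠ 0) (hq : q ≠ 0)
    (α β γ δ : A)
    (hαβ : α * β + p⁻¹ • (β * α) = 0)
    (hαγ : α * γ + q⁻¹ • (γ * α) = 0)
    (hγδ : γ * δ + p⁻¹ • (δ * γ) = 0)
    (hβδ : β * δ + q⁻¹ • (δ * β) = 0)
    (hαδ : α * δ + δ * α = 0)
    (hα2 : α ^ 2 = 0) (hβ2 : β ^ 2 = 0) (hγ2 : γ ^ 2 = 0) (hδ2 : δ ^ 2 = 0)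
    (hβγ : β * γ + (p * q⁻¹) • (γ * β) = (p - q⁻¹) • (δ * α)) :
    (!![α, β; γ, δ] : Matrix (Fin 2) (Fin 2) A) *
        !![(-q) • δ, β; (-(q * p⁻¹)) • γ, p⁻¹ • α] =
      (γ * β - p⁻¹ • (α * δ)) • (1 : Matrix (Fin 2) (Fin 2) A) := by
  have hδα : δ * α = -(α * δ) := eq_neg_of_add_eq_zero_right hαδ
  have hβγ' : β * γ = (p - q⁻¹) • (δ * α) - (p * q⁻¹) • (γ * β) :=
    eq_sub_of_add_eq hβγ
  have hβα : β * α = -(p • (α * β)) := by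
    have h : p⁻¹ • (β * α) = -(α * β) := eq_neg_of_add_eq_zero_right hαβ
    calc β * α = p • (p⁻¹ • (β * α)) := by rw [smul_smul, mul_inv_cancel₀ hp, one_smul]
    _ = -(p • (α * β)) := by rw [h, smul_neg]
  have hδγ : δ * γ = -(p • (γ * δ)) := by
    have h : p⁻¹ • (δ * γ) = -(γ * δ) := eq_neg_of_add_eq_zero_right hγδ
    calc δ * γ = p • (p⁻¹ • (δ * γ)) := by rw [smul_smul, mul_inv_cancel₀ hp, one_smul]
    _ = -(p • (γ * δ)) := by rw [h, smul_neg]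
  ext i j
  fin_cases i <;> fin_cases j <;>
    simp [Matrix.mul_apply, Fin.sum_univ_two, Matrix.one_apply, mul_smul_comm,
      smul_smul, hβγ', hδα, hβα, hδγ] <;>
    match_scalars <;> field_simp <;> ring
end

section
/- Under the Gr_{p,q}(2) relations, with Δ_L := βγ + q⁻¹δα, Δ_R := γβ − p⁻¹αδ, Â_L⁻¹ the 2×2 matrix with rows (q⁻¹δ, β) and (−pq⁻¹γ, −pα), and Â_R⁻¹ the 2×2 matrix with rows (−qδ, β) and (−qp⁻¹γ, p⁻¹α), one has the matrix identity Δ_L · Â_R⁻¹ = Â_L⁻¹ · Δ_R, i.e. multiplying each entry of Â_R⁻¹ on the left by Δ_L gives the same matrix as multiplying each entry of Â_L⁻¹ on the right by Δ_R. -/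
private lemma solve_rel {A : Type*} [Ring A] [Algebra ℂ A] {c : ℂ} (hc : c ≠ 0)
    {x y : A} (h : x + c⁻¹ • y = 0) : y = (-c) • x := by
  have h1 : c⁻¹ • y = -x := eq_neg_of_add_eq_zero_right h
  calc y = (c * c⁻¹) • y := by rw [mul_inv_cancel₀ hc, one_smul]
    _ = c • (c⁻¹ • y) := by rw [mul_smul]
    _ = c • (-x) := by rw [h1]
    _ = (-c) • x := by rw [smul_neg, neg_smul]

/-- Under the Gr_{p,q}(2) relations, Δ_L · Â_R⁻¹ = Â_L⁻¹ · Δ_R, where the left-hand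
side multiplies each entry of Â_R⁻¹ on the left by Δ_L and the right-hand side
multiplies each entry of Â_L⁻¹ on the right by Δ_R. -/
theorem grassmann_det_inverse_compat
    (A : Type*) [Ring A] [Algebra ℂ A] (p q : ℂ) (hp : p ≠ 0) (hq : q ≠ 0)
    (α β γ δ : A)
    (hαβ : α * β + p⁻¹ • (β * α) = 0)
    (hαγ : α * γ + q⁻¹ • (γ * α) = 0)
    (hγδ : γ * δ + p⁻¹ • (δ * γ) = 0)
    (hβδ : β * δ + q⁻¹ • (δ * β) = 0)
    (hαδ : α * δ + δ * α = 0)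
    (hα2 : α ^ 2 = 0) (hβ2 : β ^ 2 = 0) (hγ2 : γ ^ 2 = 0) (hδ2 : δ ^ 2 = 0)
    (hβγ : β * γ + (p * q⁻¹) • (γ * β) = (p - q⁻¹) • (δ * α)) :
    (!![(-q) • δ, β; (-(q * p⁻¹)) • γ, p⁻¹ • α] : Matrix (Fin 2) (Fin 2) A).map
        (fun x => (β * γ + q⁻¹ • (δ * α)) * x) =
      (!![q⁻¹ • δ, β; (-(p * q⁻¹)) • γ, (-p) • α] : Matrix (Fin 2) (Fin 2) A).map
        (fun x => x * (γ * β - p⁻¹ • (α * δ))) := by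
  -- directed rewrite rules: normal order α < γ < β < δ
  have r1 : β * α = (-p) • (α * β) := solve_rel hp hαβ
  have r1' : ∀ x : A, β * (α * x) = (-p) • (α * (β * x)) := fun x => by
    rw [← mul_assoc, r1, smul_mul_assoc, mul_assoc]
  have r2 : γ * α = (-q) • (α * γ) := solve_rel hq hαγ
  have r2' : ∀ x : A, γ * (α * x) = (-q) • (α * (γ * x)) := fun x => by
    rw [← mul_assoc, r2, smul_mul_assoc, mul_assoc]
  have r3 : δ * γ = (-p) • (γ * δ) := solve_rel hp hγδ
  have r3' : ∀ x : A, δ * (γ * x) = (-p) • (γ * (δ * x)) := fun x => by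
    rw [← mul_assoc, r3, smul_mul_assoc, mul_assoc]
  have r4 : δ * β = (-q) • (β * δ) := solve_rel hq hβδ
  have r4' : ∀ x : A, δ * (β * x) = (-q) • (β * (δ * x)) := fun x => by
    rw [← mul_assoc, r4, smul_mul_assoc, mul_assoc]
  have r5 : δ * α = -(α * δ) := eq_neg_of_add_eq_zero_right hαδ
  have r5' : ∀ x : A, δ * (α * x) = -(α * (δ * x)) := fun x => by
    rw [← mul_assoc, r5, neg_mul, mul_assoc]
  have r6 : β * γ = (p - q⁻¹) • (δ * α) - (p * q⁻¹) • (γ * β) :=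
    eq_sub_of_add_eq hβγ
  have r6' : ∀ x : A, β * (γ * x)
      = (p - q⁻¹) • (δ * (α * x)) - (p * q⁻¹) • (γ * (β * x)) := fun x => by
    rw [← mul_assoc, r6, sub_mul, smul_mul_assoc, smul_mul_assoc, mul_assoc, mul_assoc]
  have sα : α * α = 0 := by rw [← sq, hα2]
  have sα' : ∀ x : A, α * (α * x) = 0 := fun x => by rw [← mul_assoc, sα, zero_mul]
  have sβ : β * β = 0 := by rw [← sq, hβ2]
  have sβ' : ∀ x : A, β * (β * x) = 0 := fun x => by rw [← mul_assoc, sβ, zero_mul]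
  have sγ : γ * γ = 0 := by rw [← sq, hγ2]
  have sγ' : ∀ x : A, γ * (γ * x) = 0 := fun x => by rw [← mul_assoc, sγ, zero_mul]
  have sδ : δ * δ = 0 := by rw [← sq, hδ2]
  have sδ' : ∀ x : A, δ * (δ * x) = 0 := fun x => by rw [← mul_assoc, sδ, zero_mul]
  ext i j
  fin_cases i <;> fin_cases j <;>
    simp only [Matrix.map_apply, Matrix.of_apply, Matrix.cons_val', Matrix.cons_val_zero, Matrix.cons_val_one,
      Matrix.head_cons, Matrix.head_fin_const, Matrix.empty_val', Matrix.cons_val_fin_one,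
      Fin.isValue, Fin.mk_zero, Fin.mk_one] <;>
    simp only [mul_add, add_mul, mul_sub, sub_mul, smul_mul_assoc, mul_smul_comm, smul_smul,
      smul_add, smul_sub, smul_neg, neg_smul, mul_assoc, r1, r1', r2, r2', r3, r3', r4, r4',
      r5, r5', r6, r6', sα, sα', sβ, sβ', sγ, sγ', sδ, sδ', neg_mul, mul_neg, mul_zero, zero_mul, smul_zero,
      add_zero, zero_add, sub_zero, zero_sub, neg_zero, neg_neg] <;>
    match_scalars <;> field_simp <;> ring
end

section
/- Under the Gr_{p,q}(2) relations, the 4×4 matrices Â₁ := Â ⊗ I₂ and Â₂ := I₂ ⊗ Â (ordinary, ungraded Kronecker products with the 2×2 identity matrix) satisfy the R-matrix relation R̂ · Â₁ · Â₂ = − Â₂ · Â₁ · R̂, where R̂ is the 4×4 complex matrix (regarded as a matrix over A via the unit) with rows (p + q⁻¹, 0, 0, 0), (0, 2, q⁻¹ − p, 0), (0, p − q⁻¹, 2pq⁻¹, 0), (0, 0, 0, p + q⁻¹). -/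
open Matrix Kronecker

set_option maxHeartbeats 3200000 in
/-- Under the Gr_{p,q}(2) relations, the ungraded Kronecker products Â₁ = Â ⊗ I₂ and
Â₂ = I₂ ⊗ Â satisfy the R-matrix relation R̂ Â₁ Â₂ = − Â₂ Â₁ R̂. -/
theorem grassmann_R_matrix_relation
    (A : Type*) [Ring A] [Algebra ℂ A] (p q : ℂ) (hp : p ≠ 0) (hq : q ≠ 0)
    (α β γ δ : A)
    (hαβ : α * β + p⁻¹ • (β * α) = 0)
    (hαγ : α * γ + q⁻¹ • (γ * α) = 0)
    (hγδ : γ * δ + p⁻¹ • (δ * γ) = 0)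
    (hβδ : β * δ + q⁻¹ • (δ * β) = 0)
    (hαδ : α * δ + δ * α = 0)
    (hα2 : α ^ 2 = 0) (hβ2 : β ^ 2 = 0) (hγ2 : γ ^ 2 = 0) (hδ2 : δ ^ 2 = 0)
    (hβγ : β * γ + (p * q⁻¹) • (γ * β) = (p - q⁻¹) • (δ * α))
    (Ahat : Matrix (Fin 2) (Fin 2) A) (hA : Ahat = !![α, β; γ, δ])
    (A₁ A₂ : Matrix (Fin 4) (Fin 4) A)
    (hA₁ : A₁ = Matrix.reindex (finProdFinEquiv (m := 2) (n := 2))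
      (finProdFinEquiv (m := 2) (n := 2)) (Ahat ⊗ₖ (1 : Matrix (Fin 2) (Fin 2) A)))
    (hA₂ : A₂ = Matrix.reindex (finProdFinEquiv (m := 2) (n := 2))
      (finProdFinEquiv (m := 2) (n := 2)) ((1 : Matrix (Fin 2) (Fin 2) A) ⊗ₖ Ahat))
    (R : Matrix (Fin 4) (Fin 4) A)
    (hR : R = !![algebraMap ℂ A (p + q⁻¹), 0, 0, 0;
                 0, algebraMap ℂ A 2, algebraMap ℂ A (q⁻¹ - p), 0;
                 0, algebraMap ℂ A (p - q⁻¹), algebraMap ℂ A (2 * p * q⁻¹), 0;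
                 0, 0, 0, algebraMap ℂ A (p + q⁻¹)]) :
    R * A₁ * A₂ = -(A₂ * A₁ * R) := by
  have hA₁' : A₁ = !![α,0,β,0; 0,α,0,β; γ,0,δ,0; 0,γ,0,δ] := by
    rw [hA₁, hA]; ext i j
    fin_cases i <;> fin_cases j <;>
      simp [Matrix.reindex_apply, Matrix.submatrix_apply, finProdFinEquiv,
        Fin.divNat, Fin.modNat, Matrix.one_apply, Matrix.kroneckerMap_apply,
        show ((3:Fin 4):ℕ) = 3 from rfl, Matrix.vecHead, Matrix.vecTail]
  have hA₂' : A₂ = !![α,β,0,0; γ,δ,0,0; 0,0,α,β; 0,0,γ,δ] := by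
    rw [hA₂, hA]; ext i j
    fin_cases i <;> fin_cases j <;>
      simp [Matrix.reindex_apply, Matrix.submatrix_apply, finProdFinEquiv,
        Fin.divNat, Fin.modNat, Matrix.one_apply, Matrix.kroneckerMap_apply,
        show ((3:Fin 4):ℕ) = 3 from rfl, Matrix.vecHead, Matrix.vecTail]
  have hαα : α * α = 0 := by rw [← sq]; exact hα2
  have hββ : β * β = 0 := by rw [← sq]; exact hβ2
  have hγγ : γ * γ = 0 := by rw [← sq]; exact hγ2
  have hδδ : δ * δ = 0 := by rw [← sq]; exact hδ2
  have hba : β * α = (-p) • (α * β) := by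
    have := congrArg (p • ·) hαβ
    simp [smul_add, smul_smul, mul_inv_cancel₀ hp] at this
    rw [eq_neg_of_add_eq_zero_right this]; simp
  have hga : γ * α = (-q) • (α * γ) := by
    have := congrArg (q • ·) hαγ
    simp [smul_add, smul_smul, mul_inv_cancel₀ hq] at this
    rw [eq_neg_of_add_eq_zero_right this]; simp
  have hdg : δ * γ = (-p) • (γ * δ) := by
    have := congrArg (p • ·) hγδ
    simp [smul_add, smul_smul, mul_inv_cancel₀ hp] at this
    rw [eq_neg_of_add_eq_zero_right this]; simp
  have hdb : δ * β = (-q) • (β * δ) := by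
    have := congrArg (q • ·) hβδ
    simp [smul_add, smul_smul, mul_inv_cancel₀ hq] at this
    rw [eq_neg_of_add_eq_zero_right this]; simp
  have hda : δ * α = -(α * δ) := eq_neg_of_add_eq_zero_right hαδ
  have hbg : β * γ = (q⁻¹ - p) • (α * δ) - (p * q⁻¹) • (γ * β) := by
    have h := eq_sub_of_add_eq hβγ
    rw [h, hda, smul_neg, sub_smul]
    module
  rw [hA₁', hA₂', hR]
  ext i j
  fin_cases i <;> fin_cases j <;>
      simp [Matrix.mul_apply, Fin.sum_univ_four, Algebra.algebraMap_eq_smul_one,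
        smul_mul_assoc, mul_smul_comm, Matrix.vecHead, Matrix.vecTail] <;>
      simp only [hαα, hββ, hγγ, hδδ, hba, hga, hdg, hdb, hda, hbg, smul_smul, smul_sub,
        smul_neg, smul_zero, neg_zero, mul_zero, zero_mul, add_zero, zero_add, neg_neg] <;>
      match_scalars <;> field_simp <;> ring
end

section
/- Under the Gr_{p,q}(1|1) relations, if c is invertible in A with inverse c⁻¹, then the two expressions for the quantum dual superdeterminant agree: c⁻¹b − c⁻¹αc⁻¹δ = pq⁻¹ (bc⁻¹ − αc⁻¹δc⁻¹). -/
/-- Under the Gr_{p,q}(1|1) relations, the two expressions for the quantum dual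
superdeterminant agree: c⁻¹b − c⁻¹αc⁻¹δ = pq⁻¹(bc⁻¹ − αc⁻¹δc⁻¹). -/
theorem grassmann_super_det_two_forms
    (A : Type*) [Ring A] [Algebra ℂ A] (p q : ℂ) (hp : p ≠ 0) (hq : q ≠ 0)
    (α b c δ : A)
    (hαb : α * b = p⁻¹ • (b * α)) (hαc : α * c = q⁻¹ • (c * α))
    (hδb : δ * b = p⁻¹ • (b * δ)) (hδc : δ * c = q⁻¹ • (c * δ))
    (hαδ : α * δ + δ * α = 0) (hα2 : α ^ 2 = 0) (hδ2 : δ ^ 2 = 0)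
    (hbc : b * c = (p * q⁻¹) • (c * b) + (p - q⁻¹) • (δ * α))
    (ci : A) (hci : c * ci = 1) (hci' : ci * c = 1) :
    ci * b - ci * α * ci * δ = (p * q⁻¹) • (b * ci - α * ci * δ * ci) := by
  have hciα : ci * α = q⁻¹ • (α * ci) := by
    have h : ci * (α * c) * ci = ci * (q⁻¹ • (c * α)) * ci := by rw [hαc]
    calc ci * α = ci * α * (c * ci) := by rw [hci, mul_one]
      _ = ci * (α * c) * ci := by noncomm_ring
      _ = ci * (q⁻¹ • (c * α)) * ci := h
      _ = q⁻¹ • (ci * c * (α * ci)) := by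
            simp only [mul_smul_comm, smul_mul_assoc, mul_assoc]
      _ = q⁻¹ • (α * ci) := by rw [hci', one_mul]
  have hciδ : ci * δ = q⁻¹ • (δ * ci) := by
    have h : ci * (δ * c) * ci = ci * (q⁻¹ • (c * δ)) * ci := by rw [hδc]
    calc ci * δ = ci * δ * (c * ci) := by rw [hci, mul_one]
      _ = ci * (δ * c) * ci := by noncomm_ring
      _ = ci * (q⁻¹ • (c * δ)) * ci := h
      _ = q⁻¹ • (ci * c * (δ * ci)) := by
            simp only [mul_smul_comm, smul_mul_assoc, mul_assoc]
      _ = q⁻¹ • (δ * ci) := by rw [hci', one_mul]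
  have hcib : ci * b = (p * q⁻¹) • (b * ci) + (p - q⁻¹) • (ci * (δ * α) * ci) := by
    have h : ci * (b * c) * ci
        = ci * ((p * q⁻¹) • (c * b) + (p - q⁻¹) • (δ * α)) * ci := by rw [hbc]
    calc ci * b = ci * b * (c * ci) := by rw [hci, mul_one]
      _ = ci * (b * c) * ci := by noncomm_ring
      _ = ci * ((p * q⁻¹) • (c * b) + (p - q⁻¹) • (δ * α)) * ci := h
      _ = (p * q⁻¹) • (ci * c * (b * ci)) + (p - q⁻¹) • (ci * (δ * α) * ci) := by
            simp only [mul_add, add_mul, mul_smul_comm, smul_mul_assoc, mul_assoc]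
      _ = (p * q⁻¹) • (b * ci) + (p - q⁻¹) • (ci * (δ * α) * ci) := by
            rw [hci', one_mul]
  have hαδ' : α * δ = -(δ * α) := eq_neg_of_add_eq_zero_left hαδ
  have e1 : ci * (δ * α) * ci = (q⁻¹ * q⁻¹) • (δ * α * (ci * ci)) := by
    calc ci * (δ * α) * ci = (ci * δ) * α * ci := by noncomm_ring
      _ = q⁻¹ • (δ * (ci * α) * ci) := by
            rw [hciδ]; simp only [smul_mul_assoc, mul_assoc]
      _ = q⁻¹ • (q⁻¹ • (δ * (α * (ci * ci)))) := by
            rw [hciα]; simp only [mul_smul_comm, smul_mul_assoc, mul_assoc]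
      _ = (q⁻¹ * q⁻¹) • (δ * α * (ci * ci)) := by
            rw [smul_smul]; simp only [mul_assoc]
  have e2 : ci * α * ci * δ = (q⁻¹ * q⁻¹ * q⁻¹) • (α * δ * (ci * ci)) := by
    calc ci * α * ci * δ = (ci * α) * (ci * δ) := by noncomm_ring
      _ = (q⁻¹ * q⁻¹) • (α * (ci * (δ * ci))) := by
            rw [hciα, hciδ]
            simp only [smul_mul_assoc, mul_smul_comm, smul_smul, mul_assoc]
      _ = (q⁻¹ * q⁻¹) • (α * (q⁻¹ • (δ * ci) * ci)) := by
            rw [← hciδ]; simp only [mul_assoc]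
      _ = (q⁻¹ * q⁻¹ * q⁻¹) • (α * δ * (ci * ci)) := by
            simp only [smul_mul_assoc, mul_smul_comm, smul_smul, mul_assoc]
  have e3 : α * ci * δ * ci = q⁻¹ • (α * δ * (ci * ci)) := by
    calc α * ci * δ * ci = α * (ci * δ) * ci := by noncomm_ring
      _ = q⁻¹ • (α * δ * (ci * ci)) := by
            rw [hciδ]; simp only [smul_mul_assoc, mul_smul_comm, mul_assoc]
  rw [hcib, e1, e2, e3, hαδ']
  simp only [neg_mul, smul_neg]
  module
end

section
/- Under the Gr_{p,q}(1|1) relations, if b and c are invertible in A with inverses b⁻¹ and c⁻¹, then the 2×2 matrix Â' with first row (−c⁻¹δb⁻¹, c⁻¹ + c⁻¹δb⁻¹αc⁻¹) and second row (b⁻¹ + b⁻¹αc⁻¹δb⁻¹, −b⁻¹αc⁻¹) is a two-sided inverse of Â: Â · Â' = I = Â' · Â, where I is the 2×2 identity matrix over A. -/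
/-- Under the Gr_{p,q}(1|1) relations, if b and c are invertible, the displayed
matrix Â' is a two-sided inverse of Â. -/
theorem grassmann_super_inverse
    (A : Type*) [Ring A] [Algebra ℂ A] (p q : ℂ) (hp : p ≠ 0) (hq : q ≠ 0)
    (α b c δ : A)
    (hαb : α * b = p⁻¹ • (b * α)) (hαc : α * c = q⁻¹ • (c * α))
    (hδb : δ * b = p⁻¹ • (b * δ)) (hδc : δ * c = q⁻¹ • (c * δ))
    (hαδ : α * δ + δ * α = 0) (hα2 : α ^ 2 = 0) (hδ2 : δ ^ 2 = 0)
    (hbc : b * c = (p * q⁻¹) • (c * b) + (p - q⁻¹) • (δ * α))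
    (bi ci : A) (hbi : b * bi = 1) (hbi' : bi * b = 1)
    (hci : c * ci = 1) (hci' : ci * c = 1) :
    (!![α, b; c, δ] : Matrix (Fin 2) (Fin 2) A) *
        !![-(ci * δ * bi), ci + ci * δ * bi * α * ci;
           bi + bi * α * ci * δ * bi, -(bi * α * ci)] = 1 ∧
      (!![-(ci * δ * bi), ci + ci * δ * bi * α * ci;
          bi + bi * α * ci * δ * bi, -(bi * α * ci)] : Matrix (Fin 2) (Fin 2) A) *
        !![α, b; c, δ] = 1 := by
  have bb : ∀ x : A, b * (bi * x) = x := fun x => by rw [← mul_assoc, hbi, one_mul]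
  have bb' : ∀ x : A, bi * (b * x) = x := fun x => by rw [← mul_assoc, hbi', one_mul]
  have cc : ∀ x : A, c * (ci * x) = x := fun x => by rw [← mul_assoc, hci, one_mul]
  have cc' : ∀ x : A, ci * (c * x) = x := fun x => by rw [← mul_assoc, hci', one_mul]
  have hαci : α * ci = q • (ci * α) := by
    have h := congrArg (fun x => ci * x * ci) hαc
    simp only [mul_assoc, cc', hci, mul_one, mul_smul_comm, smul_mul_assoc] at h
    rw [h, smul_smul, mul_inv_cancel₀ hq, one_smul]
  have hαbi : α * bi = p • (bi * α) := by
    have h := congrArg (fun x => bi * x * bi) hαb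
    simp only [mul_assoc, bb', hbi, mul_one, mul_smul_comm, smul_mul_assoc] at h
    rw [h, smul_smul, mul_inv_cancel₀ hp, one_smul]
  have hδci : δ * ci = q • (ci * δ) := by
    have h := congrArg (fun x => ci * x * ci) hδc
    simp only [mul_assoc, cc', hci, mul_one, mul_smul_comm, smul_mul_assoc] at h
    rw [h, smul_smul, mul_inv_cancel₀ hq, one_smul]
  have hδbi : δ * bi = p • (bi * δ) := by
    have h := congrArg (fun x => bi * x * bi) hδb
    simp only [mul_assoc, bb', hbi, mul_one, mul_smul_comm, smul_mul_assoc] at h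
    rw [h, smul_smul, mul_inv_cancel₀ hp, one_smul]
  have hαδ' : α * δ = -(δ * α) := eq_neg_of_add_eq_zero_left hαδ
  have cα : ∀ x : A, α * (ci * x) = q • (ci * (α * x)) := fun x => by
    rw [← mul_assoc, hαci, smul_mul_assoc, mul_assoc]
  have bα : ∀ x : A, α * (bi * x) = p • (bi * (α * x)) := fun x => by
    rw [← mul_assoc, hαbi, smul_mul_assoc, mul_assoc]
  have cδ : ∀ x : A, δ * (ci * x) = q • (ci * (δ * x)) := fun x => by
    rw [← mul_assoc, hδci, smul_mul_assoc, mul_assoc]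
  have bδ : ∀ x : A, δ * (bi * x) = p • (bi * (δ * x)) := fun x => by
    rw [← mul_assoc, hδbi, smul_mul_assoc, mul_assoc]
  have cα' : ∀ x : A, α * (c * x) = q⁻¹ • (c * (α * x)) := fun x => by
    rw [← mul_assoc, hαc, smul_mul_assoc, mul_assoc]
  have bα' : ∀ x : A, α * (b * x) = p⁻¹ • (b * (α * x)) := fun x => by
    rw [← mul_assoc, hαb, smul_mul_assoc, mul_assoc]
  have cδ' : ∀ x : A, δ * (c * x) = q⁻¹ • (c * (δ * x)) := fun x => by
    rw [← mul_assoc, hδc, smul_mul_assoc, mul_assoc]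
  have bδ' : ∀ x : A, δ * (b * x) = p⁻¹ • (b * (δ * x)) := fun x => by
    rw [← mul_assoc, hδb, smul_mul_assoc, mul_assoc]
  have ad : ∀ x : A, α * (δ * x) = -(δ * (α * x)) := fun x => by
    rw [← mul_assoc, hαδ', neg_mul, mul_assoc]
  have αα : ∀ x : A, α * (α * x) = 0 := fun x => by
    rw [← mul_assoc, ← sq, hα2, zero_mul]
  have dd : ∀ x : A, δ * (δ * x) = 0 := fun x => by
    rw [← mul_assoc, ← sq, hδ2, zero_mul]
  have αα' : α * α = 0 := by rw [← sq, hα2]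
  have dd' : δ * δ = 0 := by rw [← sq, hδ2]
  have e00 : α * -(ci * δ * bi) + b * (bi + bi * α * ci * δ * bi) = 1 := by
    simp only [mul_add, add_mul, mul_neg, neg_mul, mul_assoc, mul_smul_comm,
      smul_mul_assoc, smul_smul, bb, bb', cc, cc', cα, bα, cδ, bδ, cα', bα', cδ', bδ', ad, αα, dd,
      hαci, hαbi, hδci, hδbi, hαδ', αα', dd', hbi, hbi', hci, hci',
      smul_neg, neg_neg, smul_zero, mul_zero, zero_mul, mul_one, one_mul,
      add_zero, zero_add, neg_zero, hαb, hαc, hδb, hδc]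
    match_scalars <;> field_simp <;> ring
  have e01 : α * (ci + ci * δ * bi * α * ci) + b * -(bi * α * ci) = 0 := by
    simp only [mul_add, add_mul, mul_neg, neg_mul, mul_assoc, mul_smul_comm,
      smul_mul_assoc, smul_smul, bb, bb', cc, cc', cα, bα, cδ, bδ, cα', bα', cδ', bδ', ad, αα, dd,
      hαci, hαbi, hδci, hδbi, hαδ', αα', dd', hbi, hbi', hci, hci',
      smul_neg, neg_neg, smul_zero, mul_zero, zero_mul, mul_one, one_mul,
      add_zero, zero_add, neg_zero, hαb, hαc, hδb, hδc]
    match_scalars <;> field_simp <;> ring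
  have e10 : c * -(ci * δ * bi) + δ * (bi + bi * α * ci * δ * bi) = 0 := by
    simp only [mul_add, add_mul, mul_neg, neg_mul, mul_assoc, mul_smul_comm,
      smul_mul_assoc, smul_smul, bb, bb', cc, cc', cα, bα, cδ, bδ, cα', bα', cδ', bδ', ad, αα, dd,
      hαci, hαbi, hδci, hδbi, hαδ', αα', dd', hbi, hbi', hci, hci',
      smul_neg, neg_neg, smul_zero, mul_zero, zero_mul, mul_one, one_mul,
      add_zero, zero_add, neg_zero, hαb, hαc, hδb, hδc]
    match_scalars <;> field_simp <;> ring
  have e11 : c * (ci + ci * δ * bi * α * ci) + δ * -(bi * α * ci) = 1 := by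
    simp only [mul_add, add_mul, mul_neg, neg_mul, mul_assoc, mul_smul_comm,
      smul_mul_assoc, smul_smul, bb, bb', cc, cc', cα, bα, cδ, bδ, cα', bα', cδ', bδ', ad, αα, dd,
      hαci, hαbi, hδci, hδbi, hαδ', αα', dd', hbi, hbi', hci, hci',
      smul_neg, neg_neg, smul_zero, mul_zero, zero_mul, mul_one, one_mul,
      add_zero, zero_add, neg_zero, hαb, hαc, hδb, hδc]
    match_scalars <;> field_simp <;> ring
  have f00 : -(ci * δ * bi) * α + (ci + ci * δ * bi * α * ci) * c = 1 := by
    simp only [mul_add, add_mul, mul_neg, neg_mul, mul_assoc, mul_smul_comm,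
      smul_mul_assoc, smul_smul, bb, bb', cc, cc', cα, bα, cδ, bδ, cα', bα', cδ', bδ', ad, αα, dd,
      hαci, hαbi, hδci, hδbi, hαδ', αα', dd', hbi, hbi', hci, hci',
      smul_neg, neg_neg, smul_zero, mul_zero, zero_mul, mul_one, one_mul,
      add_zero, zero_add, neg_zero, hαb, hαc, hδb, hδc]
    match_scalars <;> field_simp <;> ring
  have f01 : -(ci * δ * bi) * b + (ci + ci * δ * bi * α * ci) * δ = 0 := by
    simp only [mul_add, add_mul, mul_neg, neg_mul, mul_assoc, mul_smul_comm,
      smul_mul_assoc, smul_smul, bb, bb', cc, cc', cα, bα, cδ, bδ, cα', bα', cδ', bδ', ad, αα, dd,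
      hαci, hαbi, hδci, hδbi, hαδ', αα', dd', hbi, hbi', hci, hci',
      smul_neg, neg_neg, smul_zero, mul_zero, zero_mul, mul_one, one_mul,
      add_zero, zero_add, neg_zero, hαb, hαc, hδb, hδc]
    match_scalars <;> field_simp <;> ring
  have f10 : (bi + bi * α * ci * δ * bi) * α + -(bi * α * ci) * c = 0 := by
    simp only [mul_add, add_mul, mul_neg, neg_mul, mul_assoc, mul_smul_comm,
      smul_mul_assoc, smul_smul, bb, bb', cc, cc', cα, bα, cδ, bδ, cα', bα', cδ', bδ', ad, αα, dd,
      hαci, hαbi, hδci, hδbi, hαδ', αα', dd', hbi, hbi', hci, hci',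
      smul_neg, neg_neg, smul_zero, mul_zero, zero_mul, mul_one, one_mul,
      add_zero, zero_add, neg_zero, hαb, hαc, hδb, hδc]
    match_scalars <;> field_simp <;> ring
  have f11 : (bi + bi * α * ci * δ * bi) * b + -(bi * α * ci) * δ = 1 := by
    simp only [mul_add, add_mul, mul_neg, neg_mul, mul_assoc, mul_smul_comm,
      smul_mul_assoc, smul_smul, bb, bb', cc, cc', cα, bα, cδ, bδ, cα', bα', cδ', bδ', ad, αα, dd,
      hαci, hαbi, hδci, hδbi, hαδ', αα', dd', hbi, hbi', hci, hci',
      smul_neg, neg_neg, smul_zero, mul_zero, zero_mul, mul_one, one_mul,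
      add_zero, zero_add, neg_zero, hαb, hαc, hδb, hδc]
    match_scalars <;> field_simp <;> ring
  constructor
  · rw [Matrix.mul_fin_two, Matrix.one_fin_two, e00, e01, e10, e11]
  · rw [Matrix.mul_fin_two, Matrix.one_fin_two, f00, f01, f10, f11]
end

section
/- Under the Gr_{p,q}(1|1) relations, if c is invertible in A, then the quantum dual superdeterminant D̂ := c⁻¹b − c⁻¹αc⁻¹δ satisfies the commutation relations D̂α = pq⁻¹ αD̂, D̂δ = pq⁻¹ δD̂, D̂b = pq⁻¹ bD̂, and D̂c = pq⁻¹ cD̂; in particular, for p = q the superdeterminant D̂ commutes with all four generators. -/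
private theorem mull' {A : Type*} [Ring A] {a b y : A} (h : a * b = y) (x : A) :
    a * (b * x) = y * x := by rw [← mul_assoc, h]

set_option maxHeartbeats 1600000 in
/-- Under the Gr_{p,q}(1|1) relations, the quantum dual superdeterminant
D̂ = c⁻¹b − c⁻¹αc⁻¹δ satisfies D̂x = pq⁻¹ xD̂ for each generator x; in particular
for p = q it commutes with all four generators. -/
theorem grassmann_super_det_commutation
    (A : Type*) [Ring A] [Algebra ℂ A] (p q : ℂ) (hp : p ≠ 0) (hq : q ≠ 0)
    (α b c δ : A)
    (hαb : α * b = p⁻¹ • (b * α)) (hαc : α * c = q⁻¹ • (c * α))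
    (hδb : δ * b = p⁻¹ • (b * δ)) (hδc : δ * c = q⁻¹ • (c * δ))
    (hαδ : α * δ + δ * α = 0) (hα2 : α ^ 2 = 0) (hδ2 : δ ^ 2 = 0)
    (hbc : b * c = (p * q⁻¹) • (c * b) + (p - q⁻¹) • (δ * α))
    (ci : A) (hci : c * ci = 1) (hci' : ci * c = 1)
    (D : A) (hD : D = ci * b - ci * α * ci * δ) :
    D * α = (p * q⁻¹) • (α * D) ∧ D * δ = (p * q⁻¹) • (δ * D) ∧
      D * b = (p * q⁻¹) • (b * D) ∧ D * c = (p * q⁻¹) • (c * D) ∧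
      (p = q → D * α = α * D ∧ D * δ = δ * D ∧ D * b = b * D ∧ D * c = c * D) := by
  subst hD
  have hδα' : α * δ = -(δ * α) := eq_neg_of_add_eq_zero_left hαδ
  have hαα : α * α = 0 := by rw [← pow_two]; exact hα2
  have hδδ : δ * δ = 0 := by rw [← pow_two]; exact hδ2
  have hciα : ci * α = q⁻¹ • (α * ci) := by
    calc ci * α = ci * (α * (c * ci)) := by rw [hci, mul_one]
    _ = ci * ((α * c) * ci) := by rw [mul_assoc]
    _ = q⁻¹ • (α * ci) := by
        rw [hαc, smul_mul_assoc, mul_smul_comm, ← mul_assoc, ← mul_assoc, hci', one_mul]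
  have hαci : α * ci = q • (ci * α) := by
    rw [hciα, smul_smul, mul_inv_cancel₀ hq, one_smul]
  have hciδ : ci * δ = q⁻¹ • (δ * ci) := by
    calc ci * δ = ci * (δ * (c * ci)) := by rw [hci, mul_one]
    _ = ci * ((δ * c) * ci) := by rw [mul_assoc]
    _ = q⁻¹ • (δ * ci) := by
        rw [hδc, smul_mul_assoc, mul_smul_comm, ← mul_assoc, ← mul_assoc, hci', one_mul]
  have hδci : δ * ci = q • (ci * δ) := by
    rw [hciδ, smul_smul, mul_inv_cancel₀ hq, one_smul]
  have hcib : ci * b = (p * q⁻¹) • (b * ci) + ((p - q⁻¹) * q ^ 2) • (ci * (ci * (δ * α))) := by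
    have e1 : ci * b = ci * ((b * c) * ci) := by
      rw [mul_assoc b c ci, hci, mul_one]
    rw [e1, hbc]
    simp only [add_mul, smul_mul_assoc, mul_add, mul_smul_comm, mul_assoc, mull' hci',
      one_mul, mull' hαci, mull' hδci, hαci, hδci, smul_smul, smul_add]
    match_scalars <;> ring
  have hcb : c * b = (p⁻¹ * q) • (b * c) - (p⁻¹ * q * (p - q⁻¹)) • (δ * α) := by
    have h : (p * q⁻¹)⁻¹ • (b * c - (p - q⁻¹) • (δ * α)) = c * b := by
      rw [hbc]; rw [add_sub_cancel_right, smul_smul,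
        inv_mul_cancel₀ (mul_ne_zero hp (inv_ne_zero hq)), one_smul]
    rw [← h]
    match_scalars
    all_goals try (field_simp; try ring1)
    all_goals try (rw [div_eq_iff (by simp [hp, hq])]; ring1)
    all_goals try (rw [eq_div_iff (by simp [hp, hq])]; ring1)
  have h1 : (ci * b - ci * α * ci * δ) * α = (p * q⁻¹) • (α * (ci * b - ci * α * ci * δ)) := by
    simp only [sub_mul, mul_sub, smul_sub, mul_assoc, mul_smul_comm, smul_mul_assoc, smul_smul,
      hαb, mull' hαb, hαc, mull' hαc, hαci, mull' hαci, hδb, mull' hδb, hδc, mull' hδc,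
      hδci, mull' hδci, hδα', mull' hδα', hαα, mull' hαα, hδδ, mull' hδδ,
      hcb, mull' hcb, hcib, mull' hcib, hci, mull' hci, hci', mull' hci',
      mul_add, add_mul, smul_add, neg_mul, mul_neg, smul_neg, mul_zero, zero_mul, smul_zero,
      mul_one, one_mul, neg_neg, add_zero, zero_add, sub_zero, zero_sub, neg_zero]
    match_scalars
    all_goals try ring1
    all_goals try (field_simp; try ring1)
    all_goals try (rw [div_eq_iff (by simp [hp, hq])]; ring1)
    all_goals try (rw [eq_div_iff (by simp [hp, hq])]; ring1)
  have h2 : (ci * b - ci * α * ci * δ) * δ = (p * q⁻¹) • (δ * (ci * b - ci * α * ci * δ)) := by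
    simp only [sub_mul, mul_sub, smul_sub, mul_assoc, mul_smul_comm, smul_mul_assoc, smul_smul,
      hαb, mull' hαb, hαc, mull' hαc, hαci, mull' hαci, hδb, mull' hδb, hδc, mull' hδc,
      hδci, mull' hδci, hδα', mull' hδα', hαα, mull' hαα, hδδ, mull' hδδ,
      hcb, mull' hcb, hcib, mull' hcib, hci, mull' hci, hci', mull' hci',
      mul_add, add_mul, smul_add, neg_mul, mul_neg, smul_neg, mul_zero, zero_mul, smul_zero,
      mul_one, one_mul, neg_neg, add_zero, zero_add, sub_zero, zero_sub, neg_zero]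
    match_scalars
    all_goals try ring1
    all_goals try (field_simp; try ring1)
    all_goals try (rw [div_eq_iff (by simp [hp, hq])]; ring1)
    all_goals try (rw [eq_div_iff (by simp [hp, hq])]; ring1)
  have h3 : (ci * b - ci * α * ci * δ) * b = (p * q⁻¹) • (b * (ci * b - ci * α * ci * δ)) := by
    simp only [sub_mul, mul_sub, smul_sub, mul_assoc, mul_smul_comm, smul_mul_assoc, smul_smul,
      hαb, mull' hαb, hαc, mull' hαc, hαci, mull' hαci, hδb, mull' hδb, hδc, mull' hδc,
      hδci, mull' hδci, hδα', mull' hδα', hαα, mull' hαα, hδδ, mull' hδδ,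
      hcb, mull' hcb, hcib, mull' hcib, hci, mull' hci, hci', mull' hci',
      mul_add, add_mul, smul_add, neg_mul, mul_neg, smul_neg, mul_zero, zero_mul, smul_zero,
      mul_one, one_mul, neg_neg, add_zero, zero_add, sub_zero, zero_sub, neg_zero]
    match_scalars
    all_goals try ring1
    all_goals try (field_simp; try ring1)
    all_goals try (field_simp; try ring1)
    all_goals try (rw [div_eq_iff (by simp [hp, hq])]; ring1)
    all_goals try (rw [eq_div_iff (by simp [hp, hq])]; ring1)
    all_goals try (rw [div_add' _ _ _ (by simp [hp, hq]), div_mul_eq_mul_div, div_eq_iff (by simp [hp, hq])]; ring1)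
  have h4 : (ci * b - ci * α * ci * δ) * c = (p * q⁻¹) • (c * (ci * b - ci * α * ci * δ)) := by
    simp only [sub_mul, mul_sub, smul_sub, mul_assoc, mul_smul_comm, smul_mul_assoc, smul_smul,
      hαb, mull' hαb, hαc, mull' hαc, hαci, mull' hαci, hδb, mull' hδb, hδc, mull' hδc,
      hδci, mull' hδci, hδα', mull' hδα', hαα, mull' hαα, hδδ, mull' hδδ,
      hcb, mull' hcb, hcib, mull' hcib, hci, mull' hci, hci', mull' hci',
      mul_add, add_mul, smul_add, neg_mul, mul_neg, smul_neg, mul_zero, zero_mul, smul_zero,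
      mul_one, one_mul, neg_neg, add_zero, zero_add, sub_zero, zero_sub, neg_zero]
    match_scalars
    all_goals try ring1
    all_goals try (field_simp; try ring1)
    all_goals try (rw [div_eq_iff (by simp [hp, hq])]; ring1)
    all_goals try (rw [eq_div_iff (by simp [hp, hq])]; ring1)
  refine ⟨h1, h2, h3, h4, fun hpq => ?_⟩
  subst hpq
  rw [mul_inv_cancel₀ hq, one_smul] at h1 h2 h3 h4
  exact ⟨h1, h2, h3, h4⟩
end

section
/- Under the Gr_{p,q}(1|1) relations, the graded R-matrix relation R̂ · Â₁ · Â₂ = − Â₂ · Â₁ · R̂ holds, where Â₁ is the 4×4 matrix over A with rows (α, 0, b, 0), (0, α, 0, b), (c, 0, δ, 0), (0, c, 0, δ); Â₂ is the 4×4 matrix over A with rows (−α, −b, 0, 0), (−c, −δ, 0, 0), (0, 0, −α, b), (0, 0, c, −δ); and R̂ is the 4×4 complex matrix (regarded as a matrix over A via the unit) with rows (p + q⁻¹, 0, 0, 0), (0, −2, q⁻¹ − p, 0), (0, p − q⁻¹, −2pq⁻¹, 0), (0, 0, 0, p + q⁻¹). -/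
set_option maxHeartbeats 1000000

/-- Under the Gr_{p,q}(1|1) relations, the graded R-matrix relation
R̂ Â₁ Â₂ = − Â₂ Â₁ R̂ holds. -/
theorem grassmann_super_R_matrix_relation
    (A : Type*) [Ring A] [Algebra ℂ A] (p q : ℂ) (hp : p ≠ 0) (hq : q ≠ 0)
    (α b c δ : A)
    (hαb : α * b = p⁻¹ • (b * α)) (hαc : α * c = q⁻¹ • (c * α))
    (hδb : δ * b = p⁻¹ • (b * δ)) (hδc : δ * c = q⁻¹ • (c * δ))
    (hαδ : α * δ + δ * α = 0) (hα2 : α ^ 2 = 0) (hδ2 : δ ^ 2 = 0)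
    (hbc : b * c = (p * q⁻¹) • (c * b) + (p - q⁻¹) • (δ * α))
    (A₁ A₂ R : Matrix (Fin 4) (Fin 4) A)
    (hA₁ : A₁ = !![α, 0, b, 0; 0, α, 0, b; c, 0, δ, 0; 0, c, 0, δ])
    (hA₂ : A₂ = !![-α, -b, 0, 0; -c, -δ, 0, 0; 0, 0, -α, b; 0, 0, c, -δ])
    (hR : R = !![algebraMap ℂ A (p + q⁻¹), 0, 0, 0;
                 0, algebraMap ℂ A (-2), algebraMap ℂ A (q⁻¹ - p), 0;
                 0, algebraMap ℂ A (p - q⁻¹), algebraMap ℂ A (-(2 * p * q⁻¹)), 0;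
                 0, 0, 0, algebraMap ℂ A (p + q⁻¹)]) :
    R * A₁ * A₂ = -(A₂ * A₁ * R) := by
  have hαα : α * α = 0 := by rw [← sq]; exact hα2
  have hδδ : δ * δ = 0 := by rw [← sq]; exact hδ2
  have hαδ' : α * δ = -(δ * α) := eq_neg_of_add_eq_zero_left hαδ
  subst hA₁ hA₂ hR
  ext i j
  fin_cases i <;> fin_cases j <;>
    simp [Matrix.mul_apply, Fin.sum_univ_four] <;>
    simp only [Matrix.vecHead, Matrix.vecTail, Function.comp, Algebra.algebraMap_eq_smul_one,
      smul_mul_assoc, mul_smul_comm, one_mul, mul_one, mul_zero, zero_mul, add_zero, zero_add,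
      smul_zero, neg_zero, smul_neg, neg_neg, add_mul, sub_mul, mul_add, mul_sub, smul_add,
      smul_sub, neg_mul, mul_neg, smul_smul, neg_add_rev,
      hαα, hδδ, hαδ', hαb, hαc, hδb, hδc, hbc] <;>
    (try (match_scalars <;>
      (first | ring1 | (field_simp; ring1) | (field_simp; exact Or.inl (by ring)))))
end

section
/- Under the Gr_{p,q}(1|1) relations, for every integer n ≥ 2 the (2n−1)-th matrix power of Â is given explicitly by: Â^{2n−1} has (1,1)-entry (⟨n⟩_{pq} α + p ⟨n−1⟩_{pq} δ)(bc)^{n−1}, (1,2)-entry (bc + p ⟨n−1⟩_{p²q²} αδ)(bc)^{n−2} b, (2,1)-entry (cb + q ⟨n−1⟩_{p²q²} δα)(cb)^{n−2} c, and (2,2)-entry (⟨n⟩_{pq} δ + q ⟨n−1⟩_{pq} α)(cb)^{n−1}. -/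
/-- The q-bracket ⟨N⟩_t = 1 + t + ⋯ + t^{N-1}. -/
noncomputable def qBracket (t : ℂ) (N : ℕ) : ℂ := ∑ k ∈ Finset.range N, t ^ k


lemma qBracket_succ (t : ℂ) (k : ℕ) : qBracket t (k+1) = qBracket t k + t^k :=
  Finset.sum_range_succ _ _

lemma aux (A : Type*) [Ring A] [Algebra ℂ A] (p q : ℂ) (hp : p ≠ 0) (hq : q ≠ 0)
    (α b c δ : A)
    (hαb : α * b = p⁻¹ • (b * α)) (hαc : α * c = q⁻¹ • (c * α))
    (hδb : δ * b = p⁻¹ • (b * δ)) (hδc : δ * c = q⁻¹ • (c * δ))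
    (hαδ : α * δ + δ * α = 0) (hα2 : α ^ 2 = 0) (hδ2 : δ ^ 2 = 0)
    (m : ℕ) :
    ((!![α, b; c, δ] : Matrix (Fin 2) (Fin 2) A) ^ (2*m+3)) 0 0 =
      (qBracket (p*q) (m+2) • α + (p * qBracket (p*q) (m+1)) • δ) * (b*c)^(m+1) ∧
    ((!![α, b; c, δ] : Matrix (Fin 2) (Fin 2) A) ^ (2*m+3)) 0 1 =
      (b*c + (p * qBracket (p^2*q^2) (m+1)) • (α*δ)) * (b*c)^m * b := by
  have hbα : b * α = p • (α * b) := by rw [hαb, smul_smul, mul_inv_cancel₀ hp, one_smul]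
  have hcα : c * α = q • (α * c) := by rw [hαc, smul_smul, mul_inv_cancel₀ hq, one_smul]
  have hbδ : b * δ = p • (δ * b) := by rw [hδb, smul_smul, mul_inv_cancel₀ hp, one_smul]
  have hcδ : c * δ = q • (δ * c) := by rw [hδc, smul_smul, mul_inv_cancel₀ hq, one_smul]
  have hδα : δ * α = -(α * δ) := eq_neg_of_add_eq_zero_left (by rw [add_comm]; exact hαδ)
  have hαα : α * α = 0 := by rw [← sq]; exact hα2
  have hδδ : δ * δ = 0 := by rw [← sq]; exact hδ2
  have hbα' : ∀ x : A, b*(α*x) = p • (α*(b*x)) := fun x => by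
    rw [← mul_assoc, hbα, smul_mul_assoc, mul_assoc]
  have hcα' : ∀ x : A, c*(α*x) = q • (α*(c*x)) := fun x => by
    rw [← mul_assoc, hcα, smul_mul_assoc, mul_assoc]
  have hbδ' : ∀ x : A, b*(δ*x) = p • (δ*(b*x)) := fun x => by
    rw [← mul_assoc, hbδ, smul_mul_assoc, mul_assoc]
  have hcδ' : ∀ x : A, c*(δ*x) = q • (δ*(c*x)) := fun x => by
    rw [← mul_assoc, hcδ, smul_mul_assoc, mul_assoc]
  have hαα' : ∀ x : A, α*(α*x) = 0 := fun x => by rw [← mul_assoc, hαα, zero_mul]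
  have hδδ' : ∀ x : A, δ*(δ*x) = 0 := fun x => by rw [← mul_assoc, hδδ, zero_mul]
  have hδα' : ∀ x : A, δ*(α*x) = -(α*(δ*x)) := fun x => by
    rw [← mul_assoc, hδα, neg_mul, mul_assoc]
  have hPα : ∀ k : ℕ, (b*c)^k * α = (p*q)^k • (α * (b*c)^k) := by
    intro k; induction k with
    | zero => simp
    | succ k ih =>
      calc (b*c)^(k+1) * α = (b*c)^k * ((b*c) * α) := by rw [pow_succ, mul_assoc]
        _ = (p*q) • (((b*c)^k * α) * (b*c)) := by
            rw [mul_assoc b c α, hcα, mul_smul_comm, ← mul_assoc b α c, hbα, smul_mul_assoc,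
              smul_smul, mul_comm q p, mul_smul_comm, mul_assoc, ← mul_assoc]
        _ = (p*q) • ((p*q)^k • ((α * (b*c)^k) * (b*c))) := by rw [ih, smul_mul_assoc]
        _ = (p*q)^(k+1) • (α * (b*c)^(k+1)) := by
            rw [smul_smul, ← pow_succ', mul_assoc, ← pow_succ]
  have hPδ : ∀ k : ℕ, (b*c)^k * δ = (p*q)^k • (δ * (b*c)^k) := by
    intro k; induction k with
    | zero => simp
    | succ k ih =>
      calc (b*c)^(k+1) * δ = (b*c)^k * ((b*c) * δ) := by rw [pow_succ, mul_assoc]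
        _ = (p*q) • (((b*c)^k * δ) * (b*c)) := by
            rw [mul_assoc b c δ, hcδ, mul_smul_comm, ← mul_assoc b δ c, hbδ, smul_mul_assoc,
              smul_smul, mul_comm q p, mul_smul_comm, mul_assoc, ← mul_assoc]
        _ = (p*q) • ((p*q)^k • ((δ * (b*c)^k) * (b*c))) := by rw [ih, smul_mul_assoc]
        _ = (p*q)^(k+1) • (δ * (b*c)^(k+1)) := by
            rw [smul_smul, ← pow_succ', mul_assoc, ← pow_succ]
  have hPα' : ∀ (k : ℕ) (x : A), (b*c)^k*(α*x) = (p*q)^k • (α*((b*c)^k*x)) := fun k x => by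
    rw [← mul_assoc, hPα, smul_mul_assoc, mul_assoc]
  have hPδ' : ∀ (k : ℕ) (x : A), (b*c)^k*(δ*x) = (p*q)^k • (δ*((b*c)^k*x)) := fun k x => by
    rw [← mul_assoc, hPδ, smul_mul_assoc, mul_assoc]
  have hfold : ∀ k : ℕ, (b*c)^k*(b*c) = (b*c)^(k+1) := fun k => (pow_succ _ _).symm
  have hfold' : ∀ (k : ℕ) (x : A), (b*c)^k*(b*(c*x)) = (b*c)^(k+1)*x := fun k x => by
    rw [pow_succ, mul_assoc, mul_assoc]
  have hbcX : ∀ (k : ℕ) (x : A), b*(c*((b*c)^k*x)) = (b*c)^(k+1)*x := fun k x => by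
    rw [pow_succ', mul_assoc, mul_assoc]
  have hbcX0 : ∀ k : ℕ, b*(c*(b*c)^k) = (b*c)^(k+1) := fun k => by
    rw [pow_succ', mul_assoc]
  induction m with
  | zero =>
    have hM3 : (!![α, b; c, δ] : Matrix (Fin 2) (Fin 2) A) ^ (2*0+3)
        = !![α, b; c, δ] * !![α, b; c, δ] * !![α, b; c, δ] := by
      norm_num [pow_succ, pow_zero, one_mul]
    rw [hM3]
    constructor <;>
    · simp only [Matrix.mul_apply, Fin.sum_univ_two, Matrix.cons_val_zero, Matrix.cons_val_one,
        Matrix.head_cons, Matrix.cons_val', Matrix.empty_val', Matrix.cons_val_fin_one,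
        Matrix.of_apply, Matrix.vecHead, Matrix.vecTail]
      simp only [qBracket, Finset.sum_range_succ, Finset.sum_range_zero, pow_one, pow_zero,
        zero_add, one_mul, mul_one, add_mul, mul_add, smul_mul_assoc, mul_smul_comm, smul_smul,
        mul_assoc, hαα, hαα', hδδ, hδδ', hδα, hδα', hbα, hbα', hcα, hcα', hbδ, hbδ', hcδ, hcδ',
        mul_zero, zero_mul, smul_zero, add_zero, neg_zero, one_smul]
      try module
  | succ m ih =>
    obtain ⟨ih1, ih2⟩ := ih
    have hps : 2*(m+1)+3 = (2*m+3)+1+1 := by ring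
    rw [hps, pow_succ, pow_succ]
    have hq1 : qBracket (p*q) (m+1+2) = qBracket (p*q) (m+2) + (p*q)^(m+1+1) :=
      qBracket_succ _ _
    have hq2 : qBracket (p*q) (m+1+1) = qBracket (p*q) (m+1) + (p*q)^(m+1) := qBracket_succ _ _
    have hq2' : qBracket (p*q) (m+2) = qBracket (p*q) (m+1) + (p*q)^(m+1) := qBracket_succ _ _
    have hq3 : qBracket (p^2*q^2) (m+1+1) = qBracket (p^2*q^2) (m+1) + (p^2*q^2)^(m+1) :=
      qBracket_succ _ _
    constructor <;>
    · simp only [Matrix.mul_apply, Fin.sum_univ_two, Matrix.cons_val_zero, Matrix.cons_val_one,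
        Matrix.head_cons, Matrix.cons_val', Matrix.empty_val', Matrix.cons_val_fin_one,
        Matrix.of_apply, Matrix.vecHead, Matrix.vecTail, ih1, ih2]
      simp only [add_mul, mul_add, smul_mul_assoc, mul_smul_comm, smul_smul, mul_assoc,
        hαα, hαα', hδδ, hδδ', hδα, hδα', hbα, hbα', hcα, hcα', hbδ, hbδ', hcδ, hcδ',
        hPα, hPα', hPδ, hPδ', hfold, hfold', hbcX, hbcX0,
        mul_zero, zero_mul, smul_zero, add_zero, zero_add, neg_mul, mul_neg, smul_neg, neg_neg,
        neg_zero]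
      simp only [hq1, hq2, hq2', hq3]
      module

lemma swap_entries (A : Type*) [Ring A] (α b c δ : A) (k : ℕ) :
    ((!![δ, c; b, α] : Matrix (Fin 2) (Fin 2) A) ^ k) 0 0
        = ((!![α, b; c, δ] : Matrix (Fin 2) (Fin 2) A) ^ k) 1 1 ∧
    ((!![δ, c; b, α] : Matrix (Fin 2) (Fin 2) A) ^ k) 0 1
        = ((!![α, b; c, δ] : Matrix (Fin 2) (Fin 2) A) ^ k) 1 0 := by
  set P : Matrix (Fin 2) (Fin 2) A := !![0, 1; 1, 0] with hP
  have hP2 : P * P = 1 := by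
    ext i j
    fin_cases i <;> fin_cases j <;>
      simp [hP, Matrix.mul_apply, Fin.sum_univ_two, Matrix.one_apply]
  have hPP : ∀ N : Matrix (Fin 2) (Fin 2) A, P * (P * N) = N := fun N => by
    rw [← mul_assoc, hP2, one_mul]
  have hM' : (!![δ, c; b, α] : Matrix (Fin 2) (Fin 2) A) = P * !![α, b; c, δ] * P := by
    ext i j
    fin_cases i <;> fin_cases j <;>
      simp [hP, Matrix.mul_apply, Fin.sum_univ_two]
  have hswap : ∀ k : ℕ, (!![δ, c; b, α] : Matrix (Fin 2) (Fin 2) A) ^ k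
      = P * (!![α, b; c, δ] : Matrix (Fin 2) (Fin 2) A) ^ k * P := by
    intro k
    induction k with
    | zero => simp only [pow_zero, mul_one]; rw [← mul_one (P*P), mul_assoc, hPP]
    | succ k ih =>
      rw [pow_succ, pow_succ, ih, hM']
      simp only [mul_assoc, hPP]
  rw [hswap]
  constructor <;>
    simp [hP, Matrix.mul_apply, Matrix.vecMul, dotProduct, Fin.sum_univ_two]

/-- Under the Gr_{p,q}(1|1) relations, the explicit formulas for the entries of
the odd power Â^{2n−1}, for n ≥ 2. -/
theorem grassmann_super_odd_power_entries
    (A : Type*) [Ring A] [Algebra ℂ A] (p q : ℂ) (hp : p ≠ 0) (hq : q ≠ 0)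
    (α b c δ : A)
    (hαb : α * b = p⁻¹ • (b * α)) (hαc : α * c = q⁻¹ • (c * α))
    (hδb : δ * b = p⁻¹ • (b * δ)) (hδc : δ * c = q⁻¹ • (c * δ))
    (hαδ : α * δ + δ * α = 0) (hα2 : α ^ 2 = 0) (hδ2 : δ ^ 2 = 0)
    (hbc : b * c = (p * q⁻¹) • (c * b) + (p - q⁻¹) • (δ * α))
    (n : ℕ) (hn : 2 ≤ n) :
    ((!![α, b; c, δ] : Matrix (Fin 2) (Fin 2) A) ^ (2 * n - 1)) 0 0 =
        (qBracket (p * q) n • α + (p * qBracket (p * q) (n - 1)) • δ) *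
          (b * c) ^ (n - 1) ∧
      ((!![α, b; c, δ] : Matrix (Fin 2) (Fin 2) A) ^ (2 * n - 1)) 0 1 =
        (b * c + (p * qBracket (p ^ 2 * q ^ 2) (n - 1)) • (α * δ)) *
          (b * c) ^ (n - 2) * b ∧
      ((!![α, b; c, δ] : Matrix (Fin 2) (Fin 2) A) ^ (2 * n - 1)) 1 0 =
        (c * b + (q * qBracket (p ^ 2 * q ^ 2) (n - 1)) • (δ * α)) *
          (c * b) ^ (n - 2) * c ∧
      ((!![α, b; c, δ] : Matrix (Fin 2) (Fin 2) A) ^ (2 * n - 1)) 1 1 =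
        (qBracket (p * q) n • δ + (q * qBracket (p * q) (n - 1)) • α) *
          (c * b) ^ (n - 1) := by
  obtain ⟨m, rfl⟩ : ∃ m, n = m + 2 := ⟨n - 2, by omega⟩
  have h1 := aux A p q hp hq α b c δ hαb hαc hδb hδc hαδ hα2 hδ2 m
  have h2 := aux A q p hq hp δ c b α hδc hδb hαc hαb (by rw [add_comm]; exact hαδ) hδ2 hα2 m
  have hsw := swap_entries A α b c δ (2*m+3)
  have hidx : 2*(m+2) - 1 = 2*m+3 := by omega
  have hidx1 : m + 2 - 1 = m + 1 := by omega
  have hidx2 : m + 2 - 2 = m := by omega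
  rw [hidx, hidx1, hidx2]
  rw [mul_comm q p, mul_comm (q^2) (p^2)] at h2
  refine ⟨h1.1, h1.2, ?_, ?_⟩
  · rw [← hsw.2, h2.2]
  · rw [← hsw.1, h2.1]
end
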